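/- There exist smooth functions Ψ± on ℝ², namely Ψ±(u₁,v₁) = exp(±i u₁ v₁), which are annihilated by the operators Ĥ₁ = −(1/2)(∂²_{u₁} + v₁²), Ĥ₂ = −(1/2)(∂²_{v₁} + u₁²), and D̂ = −i(u₁∂_{u₁} − v₁∂_{v₁}); moreover the operator Ĉ₁₁ = u₁v₁ + ∂_{u₁}∂_{v₁} satisfies Ĉ₁₁Ψ± = ±iΨ±, and any smooth solution of the three constraint equations is a linear combination of Ψ₊ and Ψ₋. -/

import Mathlib

open Complex

namespace Stmt9

/-- Partial derivative in the first variable. -/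
noncomputable def pu (f : ℝ → ℝ → ℂ) : ℝ → ℝ → ℂ := fun u v => deriv (fun u' => f u' v) u
/-- Partial derivative in the second variable. -/
noncomputable def pv (f : ℝ → ℝ → ℂ) : ℝ → ℝ → ℂ := fun u v => deriv (fun v' => f u v') v

/-- `Ĥ₁ = −(1/2)(∂²_{u₁} + v₁²)`. -/
noncomputable def H1op (f : ℝ → ℝ → ℂ) : ℝ → ℝ → ℂ :=
  fun u v => -(1/2 : ℂ) * (pu (pu f) u v + (v:ℂ)^2 * f u v)

/-- `Ĥ₂ = −(1/2)(∂²_{v₁} + u₁²)`. -/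
noncomputable def H2op (f : ℝ → ℝ → ℂ) : ℝ → ℝ → ℂ :=
  fun u v => -(1/2 : ℂ) * (pv (pv f) u v + (u:ℂ)^2 * f u v)

/-- `D̂ = −i(u₁∂_{u₁} − v₁∂_{v₁})`. -/
noncomputable def Dop (f : ℝ → ℝ → ℂ) : ℝ → ℝ → ℂ :=
  fun u v => -I * ((u:ℂ) * pu f u v - (v:ℂ) * pv f u v)

/-- `Ĉ₁₁ = u₁v₁ + ∂_{u₁}∂_{v₁}`. -/
noncomputable def C11op (f : ℝ → ℝ → ℂ) : ℝ → ℝ → ℂ :=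
  fun u v => (u:ℂ) * (v:ℂ) * f u v + pu (pv f) u v

lemma hd_coe (x : ℝ) : HasDerivAt (fun t : ℝ => (t : ℂ)) 1 x := by
  have h := (hasDerivAt_id x).ofReal_comp
  simp only [Complex.ofReal_one] at h
  exact h

lemma hd_exp (w : ℂ) (x : ℝ) :
    HasDerivAt (fun t : ℝ => Complex.exp (w * t)) (w * Complex.exp (w * x)) x := by
  have h1 : HasDerivAt (fun t : ℝ => w * (t : ℂ)) w x := by
    simpa using (hd_coe x).const_mul w
  simpa [mul_comm] using h1.cexp

-- derivative of t ↦ (c * t) * exp(w * t)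
lemma hd_lin_exp (c w : ℂ) (x : ℝ) :
    HasDerivAt (fun t : ℝ => (c * t) * Complex.exp (w * t))
      (c * Complex.exp (w * x) + (c * x) * (w * Complex.exp (w * x))) x := by
  have h1 : HasDerivAt (fun t : ℝ => c * (t : ℂ)) c x := by
    simpa using (hd_coe x).const_mul c
  exact h1.mul (hd_exp w x)

lemma pu_E (c : ℂ) (u v : ℝ) :
    pu (fun u v => Complex.exp (c * u * v)) u v = (c * v) * Complex.exp (c * u * v) := by
  have h : (fun u' : ℝ => Complex.exp (c * u' * v)) = fun u' : ℝ => Complex.exp ((c * v) * u') := by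
    funext u'; ring_nf
  rw [pu, h, (hd_exp (c * v) u).deriv]; ring_nf

lemma pv_E (c : ℂ) (u v : ℝ) :
    pv (fun u v => Complex.exp (c * u * v)) u v = (c * u) * Complex.exp (c * u * v) := by
  have h : (fun v' : ℝ => Complex.exp (c * u * v')) = fun v' : ℝ => Complex.exp ((c * u) * v') := by
    funext v'; ring_nf
  rw [pv, h, (hd_exp (c * u) v).deriv]

lemma pupu_E (c : ℂ) (u v : ℝ) :
    pu (pu (fun u v => Complex.exp (c * u * v))) u v
      = (c * v) * ((c * v) * Complex.exp (c * u * v)) := by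
  have h : (fun u' : ℝ => pu (fun u v => Complex.exp (c * u * v)) u' v)
      = fun u' : ℝ => (c * v) * Complex.exp ((c * v) * u') := by
    funext u'; rw [pu_E]; ring_nf
  have h2 : HasDerivAt (fun u' : ℝ => (c * v) * Complex.exp ((c * v) * u'))
      ((c * v) * ((c * v) * Complex.exp ((c * v) * u))) u := by
    simpa [mul_comm, mul_left_comm] using (hd_exp (c * v) u).const_mul (c * v)
  rw [pu, h, h2.deriv]; ring_nf

lemma pvpv_E (c : ℂ) (u v : ℝ) :
    pv (pv (fun u v => Complex.exp (c * u * v))) u v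
      = (c * u) * ((c * u) * Complex.exp (c * u * v)) := by
  have h : (fun v' : ℝ => pv (fun u v => Complex.exp (c * u * v)) u v')
      = fun v' : ℝ => (c * u) * Complex.exp ((c * u) * v') := by
    funext v'; rw [pv_E]
  have h2 : HasDerivAt (fun v' : ℝ => (c * u) * Complex.exp ((c * u) * v'))
      ((c * u) * ((c * u) * Complex.exp ((c * u) * v))) v := by
    simpa [mul_comm, mul_left_comm] using (hd_exp (c * u) v).const_mul (c * u)
  rw [pv, h, h2.deriv]

lemma pupv_E (c : ℂ) (u v : ℝ) :
    pu (pv (fun u v => Complex.exp (c * u * v))) u v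
      = c * Complex.exp (c * u * v) + (c * u) * ((c * v) * Complex.exp (c * u * v)) := by
  have h : (fun u' : ℝ => pv (fun u v => Complex.exp (c * u * v)) u' v)
      = fun u' : ℝ => (c * u') * Complex.exp ((c * v) * u') := by
    funext u'; rw [pv_E]; ring_nf
  rw [pu, h, (hd_lin_exp c (c * v) u).deriv]; ring_nf

lemma contdiff_E (c : ℂ) : ContDiff ℝ (⊤ : ℕ∞) (fun x : ℝ × ℝ => Complex.exp (c * x.1 * x.2)) := by
  apply Complex.contDiff_exp.comp
  exact (contDiff_const.mul (Complex.ofRealCLM.contDiff.comp contDiff_fst)).mul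
    (Complex.ofRealCLM.contDiff.comp contDiff_snd)

lemma hd_cosR (x : ℝ) : HasDerivAt (fun t : ℝ => Complex.cos t) (-Complex.sin x) x :=
  (Complex.hasDerivAt_cos (x : ℂ)).comp_ofReal

lemma hd_sinR (x : ℝ) : HasDerivAt (fun t : ℝ => Complex.sin t) (Complex.cos x) x :=
  (Complex.hasDerivAt_sin (x : ℂ)).comp_ofReal

lemma ode_sol {h h' : ℝ → ℂ} (hh : ∀ s, HasDerivAt h (h' s) s)
    (hh' : ∀ s, HasDerivAt h' (-(h s)) s) :
    ∀ s : ℝ, h s = h 0 * Complex.cos s + h' 0 * Complex.sin s := by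
  set g : ℝ → ℂ := fun s => h s * Complex.cos s - h' s * Complex.sin s with hg
  set k : ℝ → ℂ := fun s => h s * Complex.sin s + h' s * Complex.cos s with hk
  have hgd : ∀ s, HasDerivAt g 0 s := by
    intro s
    have := ((hh s).mul (hd_cosR s)).sub ((hh' s).mul (hd_sinR s))
    exact this.congr_deriv (by ring)
  have hkd : ∀ s, HasDerivAt k 0 s := by
    intro s
    have := ((hh s).mul (hd_sinR s)).add ((hh' s).mul (hd_cosR s))
    exact this.congr_deriv (by ring)
  have hgc : ∀ s, g s = g 0 :=
    fun s => is_const_of_deriv_eq_zero (fun t => (hgd t).differentiableAt)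
      (fun t => (hgd t).deriv) s 0
  have hkc : ∀ s, k s = k 0 :=
    fun s => is_const_of_deriv_eq_zero (fun t => (hkd t).differentiableAt)
      (fun t => (hkd t).deriv) s 0
  intro s
  have e1 : g s * Complex.cos s + k s * Complex.sin s = h s := by
    have hcs := Complex.cos_sq_add_sin_sq (s : ℂ)
    simp only [hg, hk]
    linear_combination h s * hcs
  have g0 : g 0 = h 0 := by
    simp [hg, Complex.ofReal_zero]
  have k0 : k 0 = h' 0 := by
    simp [hk, Complex.ofReal_zero]
  rw [← e1, hgc s, hkc s, g0, k0]

lemma classify (Ψ : ℝ → ℝ → ℂ) (hΨ : ContDiff ℝ (⊤ : ℕ∞) (fun x : ℝ × ℝ => Ψ x.1 x.2))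
    (e2 : ∀ u v : ℝ, pv (pv Ψ) u v = -((u:ℂ)^2 * Ψ u v))
    (e3 : ∀ u v : ℝ, (u:ℂ) * pu Ψ u v = (v:ℂ) * pv Ψ u v) :
    ∃ a b : ℂ, Ψ = fun (u v : ℝ) => a * Complex.exp (I*(u:ℂ)*(v:ℂ)) + b * Complex.exp (-(I*(u:ℂ)*(v:ℂ))) := by
  classical
  set f : ℝ × ℝ → ℂ := fun x => Ψ x.1 x.2 with hf
  have hfd : Differentiable ℝ f := hΨ.differentiable (by simp)
  set F := fderiv ℝ f with hF
  have hu : ∀ u v : ℝ, HasDerivAt (fun u' => Ψ u' v) (F (u, v) (1, 0)) u := by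
    intro u v
    have h1 : HasDerivAt (fun u' : ℝ => ((u' : ℝ), v)) ((1 : ℝ), (0 : ℝ)) u :=
      (hasDerivAt_id u).prodMk (hasDerivAt_const u v)
    exact ((hfd (u, v)).hasFDerivAt.comp_hasDerivAt u h1 : _)
  have hv : ∀ u v : ℝ, HasDerivAt (fun v' => Ψ u v') (F (u, v) (0, 1)) v := by
    intro u v
    have h1 : HasDerivAt (fun v' : ℝ => ((u : ℝ), (v' : ℝ))) ((0 : ℝ), (1 : ℝ)) v :=
      (hasDerivAt_const v u).prodMk (hasDerivAt_id v)
    exact ((hfd (u, v)).hasFDerivAt.comp_hasDerivAt v h1 : _)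
  have hpu : ∀ u v : ℝ, pu Ψ u v = F (u, v) (1, 0) := fun u v => (hu u v).deriv
  have hpv : ∀ u v : ℝ, pv Ψ u v = F (u, v) (0, 1) := fun u v => (hv u v).deriv
  -- flow invariance: Ψ (u e^t) (v e^{-t}) = Ψ u v
  have flow : ∀ u v t : ℝ, Ψ (u * Real.exp t) (v * Real.exp (-t)) = Ψ u v := by
    intro u v t
    set G : ℝ → ℂ := fun t => f (u * Real.exp t, v * Real.exp (-t)) with hG
    have hGd : ∀ t, HasDerivAt G 0 t := by
      intro t
      have h1 : HasDerivAt (fun t : ℝ => u * Real.exp t) (u * Real.exp t) t := by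
        simpa using (Real.hasDerivAt_exp t).const_mul u
      have h2 : HasDerivAt (fun t : ℝ => v * Real.exp (-t)) (-(v * Real.exp (-t))) t := by
        have := ((Real.hasDerivAt_exp (-t)).comp t ((hasDerivAt_id t).neg))
        simpa [mul_comm] using this.const_mul v
      have h3 : HasDerivAt (fun t : ℝ => ((u * Real.exp t : ℝ), (v * Real.exp (-t) : ℝ)))
          ((u * Real.exp t : ℝ), (-(v * Real.exp (-t)) : ℝ)) t := h1.prodMk h2
      set p : ℝ × ℝ := (u * Real.exp t, v * Real.exp (-t)) with hp
      have h4 : HasDerivAt G (F p (u * Real.exp t, -(v * Real.exp (-t)))) t :=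
        by have h := (hfd p).hasFDerivAt.comp_hasDerivAt t h3; exact h
      have h5 : F p (u * Real.exp t, -(v * Real.exp (-t))) = 0 := by
        have hsplit : ((u * Real.exp t : ℝ), (-(v * Real.exp (-t)) : ℝ))
            = (u * Real.exp t : ℝ) • ((1:ℝ), (0:ℝ)) + (-(v * Real.exp (-t)) : ℝ) • ((0:ℝ), (1:ℝ)) := by
          simp [Prod.ext_iff]
        rw [hsplit, map_add, map_smul, map_smul]
        have he3 := e3 (u * Real.exp t) (v * Real.exp (-t))
        rw [hpu, hpv] at he3
        rw [real_smul, real_smul]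
        push_cast at he3 ⊢
        linear_combination he3
      rw [h5] at h4; exact h4
    have := is_const_of_deriv_eq_zero (fun s => (hGd s).differentiableAt)
      (fun s => (hGd s).deriv) t 0
    simpa [hG, hf] using this
  -- representation on half planes
  have hpos : ∀ u v : ℝ, 0 < u → Ψ u v = Ψ 1 (u * v) := by
    intro u v hu0
    have := flow 1 (u * v) (Real.log u)
    rw [Real.exp_log hu0] at this
    rw [Real.exp_neg, Real.exp_log hu0] at this
    rw [one_mul] at this
    rw [show u * v * u⁻¹ = v by field_simp] at this
    exact this
  have hneg : ∀ u v : ℝ, u < 0 → Ψ u v = Ψ (-1) (-(u * v)) := by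
    intro u v hu0
    have hu0' : (0:ℝ) < -u := by linarith
    have hne : u ≠ 0 := ne_of_lt hu0
    have := flow (-1) (-(u * v)) (Real.log (-u))
    rw [Real.exp_log hu0', Real.exp_neg, Real.exp_log hu0'] at this
    rw [show (-1:ℝ) * -u = u by ring] at this
    rw [show -(u * v) * (-u)⁻¹ = v by field_simp] at this
    exact this
  -- continuity of F and smoothness
  have hFc : ContDiff ℝ (⊤ : ℕ∞) F := hΨ.fderiv_right (by simp)
  -- evaluation of F at fixed vector is differentiable along lines
  have hline1 : ∀ c : ℝ, Differentiable ℝ (fun s : ℝ => F (c, s) (0, 1)) := by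
    intro c
    have h1 : Differentiable ℝ (fun s : ℝ => F (c, s)) :=
      (hFc.differentiable (by simp)).comp ((differentiable_const c).prodMk differentiable_id)
    exact (ContinuousLinearMap.apply ℝ ℂ ((0:ℝ), (1:ℝ))).differentiable.comp h1
  have hline2 : Differentiable ℝ (fun s : ℝ => F (s, 0) (0, 1)) := by
    have h1 : Differentiable ℝ (fun s : ℝ => F (s, 0)) :=
      (hFc.differentiable (by simp)).comp (differentiable_id.prodMk (differentiable_const 0))
    exact (ContinuousLinearMap.apply ℝ ℂ ((0:ℝ), (1:ℝ))).differentiable.comp h1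
  -- pu Ψ u 0 = 0 for all u
  have axis_u : ∀ u : ℝ, pu Ψ u 0 = 0 := by
    have hne : ∀ u : ℝ, u ≠ 0 → pu Ψ u 0 = 0 := by
      intro u hu0
      have h := e3 u 0
      simp only [Complex.ofReal_zero, zero_mul] at h
      have hu0' : (u:ℂ) ≠ 0 := by exact_mod_cast hu0
      rcases mul_eq_zero.mp h with h' | h'
      · exact absurd h' hu0'
      · exact h'
    intro u
    rcases eq_or_ne u 0 with rfl | hu0
    · set φ : ℝ → ℂ := fun u => pu Ψ u 0 with hφ
      have hφeq : φ = fun u => F (u, 0) (1, 0) := funext fun u => hpu u 0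
      have hφc : Continuous φ := by
        rw [hφeq]
        exact (ContinuousLinearMap.apply ℝ ℂ ((1:ℝ), (0:ℝ))).continuous.comp
          ((hΨ.continuous_fderiv (by simp)).comp
            (continuous_id.prodMk continuous_const))
      have h1 : Filter.Tendsto φ (nhdsWithin 0 {(0:ℝ)}ᶜ) (nhds (φ 0)) :=
        (hφc.tendsto 0).mono_left nhdsWithin_le_nhds
      have h2 : Filter.Tendsto φ (nhdsWithin 0 {(0:ℝ)}ᶜ) (nhds 0) := by
        refine Filter.Tendsto.congr' ?_ tendsto_const_nhds
        filter_upwards [self_mem_nhdsWithin] with x hx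
        exact (hne x hx).symm
      exact tendsto_nhds_unique h1 h2
    · exact hne u hu0
  -- pv Ψ 0 v = 0 for all v
  have axis_v : ∀ v : ℝ, pv Ψ 0 v = 0 := by
    have hne : ∀ v : ℝ, v ≠ 0 → pv Ψ 0 v = 0 := by
      intro v hv0
      have h := e3 0 v
      simp only [Complex.ofReal_zero, zero_mul] at h
      have hv0' : (v:ℂ) ≠ 0 := by exact_mod_cast hv0
      rcases mul_eq_zero.mp h.symm with h' | h'
      · exact absurd h' hv0'
      · exact h'
    intro v
    rcases eq_or_ne v 0 with rfl | hv0
    · set φ : ℝ → ℂ := fun v => pv Ψ 0 v with hφ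
      have hφeq : φ = fun v => F (0, v) (0, 1) := funext fun v => hpv 0 v
      have hφc : Continuous φ := by
        rw [hφeq]
        exact (ContinuousLinearMap.apply ℝ ℂ ((0:ℝ), (1:ℝ))).continuous.comp
          ((hΨ.continuous_fderiv (by simp)).comp (continuous_const.prodMk continuous_id))
      have h1 : Filter.Tendsto φ (nhdsWithin 0 {(0:ℝ)}ᶜ) (nhds (φ 0)) :=
        (hφc.tendsto 0).mono_left nhdsWithin_le_nhds
      have h2 : Filter.Tendsto φ (nhdsWithin 0 {(0:ℝ)}ᶜ) (nhds 0) := by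
        refine Filter.Tendsto.congr' ?_ tendsto_const_nhds
        filter_upwards [self_mem_nhdsWithin] with x hx
        exact (hne x hx).symm
      exact tendsto_nhds_unique h1 h2
    · exact hne v hv0
  -- Ψ is constant on the u-axis
  have axisU : ∀ u : ℝ, Ψ u 0 = Ψ 0 0 := by
    intro u
    apply is_const_of_deriv_eq_zero (f := fun u => Ψ u 0)
    · exact fun x => (hu x 0).differentiableAt
    · intro x
      have : deriv (fun u' => Ψ u' 0) x = pu Ψ x 0 := rfl
      rw [this, axis_u]
  -- Ψ is constant on the v-axis
  have axisV : ∀ v : ℝ, Ψ 0 v = Ψ 0 0 := by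
    intro v
    apply is_const_of_deriv_eq_zero (f := fun v => Ψ 0 v)
    · exact fun x => (hv 0 x).differentiableAt
    · intro x
      have : deriv (fun v' => Ψ 0 v') x = pv Ψ 0 x := rfl
      rw [this, axis_v]
  -- ODE in v for fixed u = c with c² = 1
  have hODE : ∀ c : ℝ, (c:ℂ)^2 = 1 →
      ∀ s : ℝ, Ψ c s = Ψ c 0 * Complex.cos s + pv Ψ c 0 * Complex.sin s := by
    intro c hc
    apply ode_sol (h := fun s => Ψ c s) (h' := fun s => pv Ψ c s)
    · intro s
      have := hv c s
      rw [← hpv c s] at this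
      exact this
    · intro s
      have hdiff : DifferentiableAt ℝ (fun s : ℝ => pv Ψ c s) s := by
        have heq : (fun s : ℝ => pv Ψ c s) = fun s => F (c, s) (0, 1) := funext (hpv c)
        rw [heq]; exact hline1 c s
      have hda := hdiff.hasDerivAt
      have he : deriv (fun s : ℝ => pv Ψ c s) s = -(Ψ c s) := by
        have h2 := e2 c s
        have : pv (pv Ψ) c s = deriv (fun s : ℝ => pv Ψ c s) s := rfl
        rw [this] at h2
        rw [h2, hc]
        ring
      rw [he] at hda
      exact hda
  -- key constants
  set h0 : ℂ := Ψ 0 0 with hh0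
  set c : ℂ := pv Ψ 1 0 with hc
  set c' : ℂ := pv Ψ (-1) 0 with hc'
  -- derivative values of g(u) = pv Ψ u 0 away from 0
  have gpos : ∀ u : ℝ, 0 < u → pv Ψ u 0 = (u:ℂ) * c := by
    intro u hu0
    have heq : (fun v : ℝ => Ψ u v) = fun v : ℝ => Ψ 1 (u * v) := funext fun v => hpos u v hu0
    have hout : HasDerivAt (fun v : ℝ => Ψ 1 v) c (u * 0) := by
      rw [mul_zero]
      have := hv 1 0
      rw [← hpv 1 0, ← hc] at this
      exact this
    have hin : HasDerivAt (fun v : ℝ => u * v) u 0 := by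
      simpa using (hasDerivAt_id (0:ℝ)).const_mul u
    have hcomp : HasDerivAt (fun v : ℝ => Ψ 1 (u * v)) (u • c) 0 := hout.scomp 0 hin
    have : pv Ψ u 0 = deriv (fun v : ℝ => Ψ u v) 0 := rfl
    rw [this, heq, hcomp.deriv, real_smul]
  have gneg : ∀ u : ℝ, u < 0 → pv Ψ u 0 = ((-u : ℝ):ℂ) * c' := by
    intro u hu0
    have heq : (fun v : ℝ => Ψ u v) = fun v : ℝ => Ψ (-1) ((-u) * v) := by
      funext v
      rw [hneg u v hu0]
      ring_nf
    have hout : HasDerivAt (fun v : ℝ => Ψ (-1) v) c' ((-u) * 0) := by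
      rw [mul_zero]
      have := hv (-1) 0
      rw [← hpv (-1) 0, ← hc'] at this
      exact this
    have hin : HasDerivAt (fun v : ℝ => (-u) * v) (-u) 0 := by
      simpa using (hasDerivAt_id (0:ℝ)).const_mul (-u)
    have hcomp : HasDerivAt (fun v : ℝ => Ψ (-1) ((-u) * v)) ((-u) • c') 0 := hout.scomp 0 hin
    have : pv Ψ u 0 = deriv (fun v : ℝ => Ψ u v) 0 := rfl
    rw [this, heq, hcomp.deriv, real_smul]
  -- slope argument: c' = -c
  have hc'c : c' = -c := by
    set g : ℝ → ℂ := fun u => pv Ψ u 0 with hg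
    have hgeq : g = fun u => F (u, 0) (0, 1) := funext fun u => hpv u 0
    have hg0 : g 0 = 0 := axis_v 0
    have hgd : DifferentiableAt ℝ g 0 := by rw [hgeq]; exact hline2 0
    set d : ℂ := deriv g 0 with hd
    have hgda : HasDerivAt g d 0 := hgd.hasDerivAt
    have hslope := hasDerivAt_iff_tendsto_slope.mp hgda
    have hIoi : nhdsWithin (0:ℝ) (Set.Ioi 0) ≤ nhdsWithin (0:ℝ) {(0:ℝ)}ᶜ :=
      nhdsWithin_mono 0 (fun x hx => ne_of_gt hx)
    have hIio : nhdsWithin (0:ℝ) (Set.Iio 0) ≤ nhdsWithin (0:ℝ) {(0:ℝ)}ᶜ :=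
      nhdsWithin_mono 0 (fun x hx => ne_of_lt hx)
    have hcd : c = d := by
      have h1 : Filter.Tendsto (slope g 0) (nhdsWithin 0 (Set.Ioi 0)) (nhds d) :=
        hslope.mono_left hIoi
      have h2 : Filter.Tendsto (slope g 0) (nhdsWithin 0 (Set.Ioi 0)) (nhds c) := by
        refine Filter.Tendsto.congr' ?_ tendsto_const_nhds
        filter_upwards [self_mem_nhdsWithin] with x hx
        have hx0 : (0:ℝ) < x := hx
        have hxne : (x:ℂ) ≠ 0 := by exact_mod_cast ne_of_gt hx0
        have : slope g 0 x = (x - 0)⁻¹ • (g x - g 0) := by simp [slope_def_module]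
        rw [this, hg0, sub_zero, sub_zero]
        have hgx : g x = (x:ℂ) * c := gpos x hx0
        rw [hgx, real_smul]
        push_cast
        field_simp
      exact tendsto_nhds_unique h2 h1
    have hc'd : -c' = d := by
      have h1 : Filter.Tendsto (slope g 0) (nhdsWithin 0 (Set.Iio 0)) (nhds d) :=
        hslope.mono_left hIio
      have h2 : Filter.Tendsto (slope g 0) (nhdsWithin 0 (Set.Iio 0)) (nhds (-c')) := by
        refine Filter.Tendsto.congr' ?_ tendsto_const_nhds
        filter_upwards [self_mem_nhdsWithin] with x hx
        have hx0 : x < (0:ℝ) := hx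
        have hxne : (x:ℂ) ≠ 0 := by exact_mod_cast ne_of_lt hx0
        have : slope g 0 x = (x - 0)⁻¹ • (g x - g 0) := by simp [slope_def_module]
        rw [this, hg0, sub_zero, sub_zero]
        have hgx : g x = ((-x : ℝ):ℂ) * c' := gneg x hx0
        rw [hgx, real_smul]
        push_cast
        field_simp
      exact tendsto_nhds_unique h2 h1
    have : c = -c' := by rw [hcd, ← hc'd]
    rw [this]; ring
  -- final assembly
  have hΨ10 : Ψ 1 0 = h0 := axisU 1
  have hΨm10 : Ψ (-1) 0 = h0 := axisU (-1)
  have hone : ((1:ℝ):ℂ)^2 = 1 := by norm_num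
  have hmone : (((-1):ℝ):ℂ)^2 = 1 := by push_cast; ring
  refine ⟨(h0 - I * c) / 2, (h0 + I * c) / 2, ?_⟩
  have key : ∀ x : ℝ,
      (h0 - I * c) / 2 * Complex.exp ((x:ℂ) * I) + (h0 + I * c) / 2 * Complex.exp (-((x:ℂ) * I))
        = h0 * Complex.cos x + c * Complex.sin x := by
    intro x
    rw [Complex.exp_mul_I, show -((x:ℂ) * I) = (-(x:ℂ)) * I by ring, Complex.exp_mul_I,
      Complex.cos_neg, Complex.sin_neg]
    have hI : (I:ℂ) * I = -1 := Complex.I_mul_I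
    linear_combination (-(Complex.sin ((x:ℝ):ℂ)) * c) * hI
  funext u v
  have harg : (I:ℂ) * (u:ℂ) * (v:ℂ) = ((u * v : ℝ):ℂ) * I := by push_cast; ring
  rw [harg, key (u * v)]
  rcases lt_trichotomy u 0 with hu0 | hu0 | hu0
  · rw [hneg u v hu0, hODE (-1) hmone (-(u * v)), hΨm10, ← hc', hc'c]
    push_cast
    rw [Complex.cos_neg, Complex.sin_neg]
    ring
  · subst hu0
    rw [axisV v]
    push_cast
    rw [zero_mul, Complex.cos_zero, Complex.sin_zero]
    ring
  · rw [hpos u v hu0, hODE 1 hone (u * v), hΨ10]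

lemma H1_E (c : ℂ) (hc : c^2 = -1) :
    H1op (fun u v => Complex.exp (c * u * v)) = fun _ _ => 0 := by
  funext u v
  simp only [H1op, pupu_E]
  linear_combination (-(1/2 : ℂ) * (v:ℂ)^2 * Complex.exp (c * u * v)) * hc

lemma H2_E (c : ℂ) (hc : c^2 = -1) :
    H2op (fun u v => Complex.exp (c * u * v)) = fun _ _ => 0 := by
  funext u v
  simp only [H2op, pvpv_E]
  linear_combination (-(1/2 : ℂ) * (u:ℂ)^2 * Complex.exp (c * u * v)) * hc

lemma D_E (c : ℂ) :
    Dop (fun u v => Complex.exp (c * u * v)) = fun _ _ => 0 := by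
  funext u v
  simp only [Dop, pu_E, pv_E]
  ring

lemma C11_E (c : ℂ) (hc : c^2 = -1) :
    C11op (fun u v => Complex.exp (c * u * v)) = fun (u v : ℝ) => c * Complex.exp (c * (u:ℂ) * (v:ℂ)) := by
  funext u v
  simp only [C11op, pupv_E]
  linear_combination ((u:ℂ) * (v:ℂ) * Complex.exp (c * u * v)) * hc

/-- For `p = q = 1`: the smooth states `Ψ± = exp(±iu₁v₁)` are annihilated by all three
constraint operators, satisfy `Ĉ₁₁Ψ± = ±iΨ±`, and every smooth solution of the
constraints is a linear combination of `Ψ₊` and `Ψ₋`. -/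
theorem pq11_solutions :
    ∃ Ψp Ψm : ℝ → ℝ → ℂ,
      (∀ u v : ℝ, Ψp u v = Complex.exp (I * u * v)) ∧
      (∀ u v : ℝ, Ψm u v = Complex.exp (-(I * u * v))) ∧
      ContDiff ℝ (⊤ : ℕ∞) (fun x : ℝ × ℝ => Ψp x.1 x.2) ∧
      ContDiff ℝ (⊤ : ℕ∞) (fun x : ℝ × ℝ => Ψm x.1 x.2) ∧
      H1op Ψp = (fun _ _ => 0) ∧ H2op Ψp = (fun _ _ => 0) ∧ Dop Ψp = (fun _ _ => 0) ∧
      H1op Ψm = (fun _ _ => 0) ∧ H2op Ψm = (fun _ _ => 0) ∧ Dop Ψm = (fun _ _ => 0) ∧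
      C11op Ψp = (fun u v => I * Ψp u v) ∧
      C11op Ψm = (fun u v => -I * Ψm u v) ∧
      (∀ Ψ : ℝ → ℝ → ℂ, ContDiff ℝ (⊤ : ℕ∞) (fun x : ℝ × ℝ => Ψ x.1 x.2) →
        H1op Ψ = (fun _ _ => 0) → H2op Ψ = (fun _ _ => 0) → Dop Ψ = (fun _ _ => 0) →
        ∃ a b : ℂ, Ψ = fun u v => a * Ψp u v + b * Ψm u v) := by
  classical
  refine ⟨fun u v => Complex.exp (I * u * v), fun u v => Complex.exp ((-I) * u * v),
    fun u v => rfl, fun u v => by show Complex.exp _ = _; congr 1; ring, contdiff_E I, contdiff_E (-I), ?_, ?_, ?_, ?_, ?_, ?_, ?_, ?_, ?_⟩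
  · exact H1_E I (by simp [Complex.I_sq])
  · exact H2_E I (by simp [Complex.I_sq])
  · exact D_E I
  · exact H1_E (-I) (by simp [Complex.I_sq])
  · exact H2_E (-I) (by simp [Complex.I_sq])
  · exact D_E (-I)
  · exact C11_E I (by simp [Complex.I_sq])
  · exact C11_E (-I) (by simp [Complex.I_sq])
  · intro Ψ hs h1 h2 h3
    have e2 : ∀ u v : ℝ, pv (pv Ψ) u v = -((u:ℂ)^2 * Ψ u v) := by
      intro u v
      have := congrFun (congrFun h2 u) v
      simp only [H2op] at this
      linear_combination (-2 : ℂ) * this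
    have e3 : ∀ u v : ℝ, (u:ℂ) * pu Ψ u v = (v:ℂ) * pv Ψ u v := by
      intro u v
      have := congrFun (congrFun h3 u) v
      simp only [Dop] at this
      have hI : (-I : ℂ) ≠ 0 := by simp [Complex.I_ne_zero]
      have := (mul_eq_zero.mp this).resolve_left hI
      linear_combination this
    obtain ⟨a, b, hab⟩ := classify Ψ hs e2 e3
    refine ⟨a, b, ?_⟩
    rw [hab]
    funext u v
    show a * Complex.exp (I * u * v) + b * Complex.exp (-(I * u * v))
        = a * Complex.exp (I * u * v) + b * Complex.exp (-I * u * v)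
    rw [show (-(I * (u:ℂ) * (v:ℂ))) = (-I) * (u:ℂ) * (v:ℂ) by ring]


end Stmt9
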